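/- arXiv:2310.08229 — 2 statements merged into one kernel-verified Lean document; each statement's English description precedes it below -/
import Mathlib

section
/- For any L-class L of a semigroup S, the relation H_L̄ := (H ∩ (L × L)) ∪ {(0,0)} is a congruence of the principal factor left S-act ᔆL̄ on L ∪ {0}. -/
open scoped Classical

/-- Green's preorder `≤_L`: `x ≤_L y` iff `x = y` or `x = a y` for some `a`. -/
def leL {S : Type*} [Mul S] (x y : S) : Prop := x = y ∨ ∃ a : S, x = a * y

/-- Green's relation `L`. -/
def lrel {S : Type*} [Mul S] (x y : S) : Prop := leL x y ∧ leL y x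

/-- Green's preorder `≤_R`: `x ≤_R y` iff `x = y` or `x = y a` for some `a`. -/
def leR {S : Type*} [Mul S] (x y : S) : Prop := x = y ∨ ∃ a : S, x = y * a

/-- Green's relation `R`. -/
def rrel {S : Type*} [Mul S] (x y : S) : Prop := leR x y ∧ leR y x

/-- Green's relation `H = L ∩ R`. -/
def hrel {S : Type*} [Mul S] (x y : S) : Prop := lrel x y ∧ rrel x y

/-- The principal factor act on `L ∪ {0}` (with `0 = none`). -/
noncomputable def pfAct {M A : Type*} (act : M → A → A) (L : Set A) (m : M) :
    Option ↥L → Option ↥L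
  | none => none
  | some x => if h : act m ↑x ∈ L then some ⟨act m ↑x, h⟩ else none

/-- The relation `H_L̄ = (H ∩ (L × L)) ∪ {(0,0)}` on `L ∪ {0}`. -/
def HbarRel {S : Type*} [Mul S] (L : Set S) (a b : Option ↥L) : Prop :=
  (a = none ∧ b = none) ∨
    ∃ x y : ↥L, a = some x ∧ b = some y ∧ hrel (x : S) (y : S)

/-! `L` is a right congruence and `R` a left congruence; so if `x H y`, say `y = x a`, left
multiplication by `s` keeps `x` in its `L`-class exactly when it keeps `y` in its `L`-class
(because `s y = (s x) a`), and then `s x H s y`. Hence left multiplication either sends a whole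
`H`-class inside `L` back into `L` or sends all of it to `0`. -/

section Green

variable {S : Type*} [Semigroup S] {x y z : S}

lemma leL_trans (hxy : leL x y) (hyz : leL y z) : leL x z := by
  rcases hxy with rfl | ⟨a, rfl⟩
  · exact hyz
  · rcases hyz with rfl | ⟨b, rfl⟩
    · exact Or.inr ⟨a, rfl⟩
    · exact Or.inr ⟨a * b, (mul_assoc a b z).symm⟩

lemma leR_trans (hxy : leR x y) (hyz : leR y z) : leR x z := by
  rcases hxy with rfl | ⟨a, rfl⟩
  · exact hyz
  · rcases hyz with rfl | ⟨b, rfl⟩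
    · exact Or.inr ⟨a, rfl⟩
    · exact Or.inr ⟨b * a, mul_assoc z b a⟩

lemma lrel_equivalence : Equivalence (lrel : S → S → Prop) where
  refl _ := ⟨Or.inl rfl, Or.inl rfl⟩
  symm h := ⟨h.2, h.1⟩
  trans h₁ h₂ := ⟨leL_trans h₁.1 h₂.1, leL_trans h₂.2 h₁.2⟩

lemma rrel_equivalence : Equivalence (rrel : S → S → Prop) where
  refl _ := ⟨Or.inl rfl, Or.inl rfl⟩
  symm h := ⟨h.2, h.1⟩
  trans h₁ h₂ := ⟨leR_trans h₁.1 h₂.1, leR_trans h₂.2 h₁.2⟩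

lemma hrel_equivalence : Equivalence (hrel : S → S → Prop) where
  refl x := ⟨lrel_equivalence.refl x, rrel_equivalence.refl x⟩
  symm h := ⟨lrel_equivalence.symm h.1, rrel_equivalence.symm h.2⟩
  trans h₁ h₂ := ⟨lrel_equivalence.trans h₁.1 h₂.1, rrel_equivalence.trans h₁.2 h₂.2⟩

lemma leL_mul_right (h : leL x y) (a : S) : leL (x * a) (y * a) := by
  rcases h with rfl | ⟨c, rfl⟩
  · exact Or.inl rfl
  · exact Or.inr ⟨c, mul_assoc c y a⟩

lemma lrel_mul_right (h : lrel x y) (a : S) : lrel (x * a) (y * a) :=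
  ⟨leL_mul_right h.1 a, leL_mul_right h.2 a⟩

lemma leR_mul_left (h : leR x y) (s : S) : leR (s * x) (s * y) := by
  rcases h with rfl | ⟨c, rfl⟩
  · exact Or.inl rfl
  · exact Or.inr ⟨c, (mul_assoc s y c).symm⟩

lemma rrel_mul_left (h : rrel x y) (s : S) : rrel (s * x) (s * y) :=
  ⟨leR_mul_left h.1 s, leR_mul_left h.2 s⟩

lemma lrel_mul_left_of_leR {s : S} (hx : lrel (s * x) x) (hyx : leR y x) :
    lrel (s * y) y := by
  rcases hyx with rfl | ⟨a, rfl⟩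
  · exact hx
  · rw [← mul_assoc]
    exact lrel_mul_right hx a

lemma hrel.lrel_mul_left_iff (h : hrel x y) (s : S) :
    lrel (s * x) x ↔ lrel (s * y) y :=
  ⟨fun hx => lrel_mul_left_of_leR hx h.2.2, fun hy => lrel_mul_left_of_leR hy h.2.1⟩

lemma hrel.mul_left_of_lrel {s : S} (h : hrel x y) (hx : lrel (s * x) x) :
    hrel (s * x) (s * y) :=
  have hy : lrel (s * y) y := (h.lrel_mul_left_iff s).1 hx
  ⟨lrel_equivalence.trans hx (lrel_equivalence.trans h.1 (lrel_equivalence.symm hy)),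
    rrel_mul_left h.2 s⟩

end Green

lemma hbarRel_equivalence {S : Type*} [Semigroup S] (L : Set S) : Equivalence (HbarRel L) where
  refl
    | none => Or.inl ⟨rfl, rfl⟩
    | some x => Or.inr ⟨x, x, rfl, rfl, hrel_equivalence.refl _⟩
  symm := by
    rintro a b (⟨rfl, rfl⟩ | ⟨x, y, rfl, rfl, h⟩)
    · exact Or.inl ⟨rfl, rfl⟩
    · exact Or.inr ⟨y, x, rfl, rfl, hrel_equivalence.symm h⟩
  trans := by
    rintro a b c (⟨rfl, rfl⟩ | ⟨x, y, rfl, rfl, hxy⟩) hbc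
    · exact hbc
    · rcases hbc with ⟨h, -⟩ | ⟨y', z, hy', rfl, hyz⟩
      · cases h
      · cases Option.some_injective _ hy'
        exact Or.inr ⟨x, z, rfl, rfl, hrel_equivalence.trans hxy hyz⟩

lemma hbarRel_pfAct_mul {S : Type*} [Semigroup S] (u s : S) {a b : Option ↥{z | lrel u z}}
    (hab : HbarRel {z | lrel u z} a b) :
    HbarRel {z | lrel u z}
      (pfAct (fun s y => s * y) {z | lrel u z} s a)
      (pfAct (fun s y => s * y) {z | lrel u z} s b) := by
  rcases hab with ⟨rfl, rfl⟩ | ⟨⟨x, hx⟩, ⟨y, hy⟩, rfl, rfl, hxy⟩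
  · exact Or.inl ⟨rfl, rfl⟩
  have mem_iff : ∀ {w : S}, lrel u w → (lrel u (s * w) ↔ lrel (s * w) w) := fun hw =>
    ⟨fun h => lrel_equivalence.trans (lrel_equivalence.symm h) hw,
      fun h => lrel_equivalence.trans hw (lrel_equivalence.symm h)⟩
  have hxy_mem : s * x ∈ {z | lrel u z} ↔ s * y ∈ {z | lrel u z} :=
    (mem_iff hx).trans ((hxy.lrel_mul_left_iff s).trans (mem_iff hy).symm)
  simp only [pfAct]
  by_cases hsx : s * x ∈ {z | lrel u z}
  · rw [dif_pos hsx, dif_pos (hxy_mem.1 hsx)]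
    exact Or.inr ⟨_, _, rfl, rfl, hxy.mul_left_of_lrel ((mem_iff hx).1 hsx)⟩
  · rw [dif_neg hsx, dif_neg (hxy_mem.not.1 hsx)]
    exact Or.inl ⟨rfl, rfl⟩

/-- For any `L`-class `L` (of an element `u`) of a semigroup `S`, the relation
`H_L̄ := (H ∩ (L × L)) ∪ {(0,0)}` is a congruence of the principal factor left
`S`-act on `L ∪ {0}`: an equivalence relation compatible with the action. -/
theorem HbarRel_is_act_congruence {S : Type*} [Semigroup S] (u : S) :
    Equivalence (HbarRel {z | lrel u z}) ∧
    ∀ (s : S) (a b : Option ↥{z | lrel u z}),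
      HbarRel {z | lrel u z} a b →
        HbarRel {z | lrel u z}
          (pfAct (fun s y => s * y) {z | lrel u z} s a)
          (pfAct (fun s y => s * y) {z | lrel u z} s b) :=
  ⟨hbarRel_equivalence _, fun s _ _ => hbarRel_pfAct_mul u s⟩
end

section
/- Let S be a semigroup, L an L-class of S, and H an H-class contained in L. Then the interval [Δ, H_L̄] of the congruence lattice Cong(ᔆL̄) of the principal factor act — where Δ is the diagonal on L ∪ {0} and H_L̄ = (H ∩ (L×L)) ∪ {(0,0)} — is isomorphic as a lattice to the subgroup lattice Sub(Γ(H)) of the Schützenberger group of H; moreover the isomorphism onto the lattice of left congruences of the Schützenberger group structure on H is given by restriction σ ↦ σ↾_H. -/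
open scoped Classical

/-- The lattice of congruences of an act, as a partially ordered type. -/
abbrev ActCong (M A : Type*) (act : M → A → A) :=
  {σ : Setoid A // ∀ (m : M) ⦃a b : A⦄, σ.r a b → σ.r (act m a) (act m b)}

/-! By Green's lemma, right multiplication by `t` with `vt ∈ H` permutes `H`, and likewise the
whole `L`-class `L`, commuting with the partial left action of `S`; the Schützenberger group
`Γ(H)` of these translations acts freely on `H`. Fix `v ∈ H`. A congruence `σ` below `H̄`
relates only `H`-related elements of `L`, i.e. pairs `(x, xt)`, and writing `x = cv` or
`v = cx` shows that `σ` relates `x` to `xt` exactly when it relates `v` to `vt`. Hence `σ` is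
the orbit relation on `L` of the subgroup `{π ∈ Γ(H) | v σ π(v)}`. Conversely the orbit
relation of any subgroup `K` is such a congruence, and freeness recovers `K` from it. -/

section Green

variable {S : Type*} [Semigroup S] {x y z : S}

theorem leL_refl (x : S) : leL x x := Or.inl rfl

theorem leL.trans (h₁ : leL x y) (h₂ : leL y z) : leL x z := by
  rcases h₁ with rfl | ⟨a, rfl⟩
  · exact h₂
  · rcases h₂ with rfl | ⟨b, rfl⟩
    · exact Or.inr ⟨a, rfl⟩
    · exact Or.inr ⟨a * b, (mul_assoc ..).symm⟩

theorem leL.mul_right (h : leL x y) (t : S) : leL (x * t) (y * t) := by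
  rcases h with rfl | ⟨a, rfl⟩
  · exact leL_refl _
  · exact Or.inr ⟨a, mul_assoc ..⟩

theorem leL.mul_eq_mul (h : leL x y) {t t' : S} (e : y * t = y * t') : x * t = x * t' := by
  rcases h with rfl | ⟨a, rfl⟩
  · exact e
  · rw [mul_assoc, mul_assoc, e]

theorem leL.mul_eq_self (h : leL x y) {t : S} (e : y * t = y) : x * t = x := by
  rcases h with rfl | ⟨a, rfl⟩
  · exact e
  · rw [mul_assoc, e]

theorem leR_refl (x : S) : leR x x := Or.inl rfl

theorem leR.trans (h₁ : leR x y) (h₂ : leR y z) : leR x z := by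
  rcases h₁ with rfl | ⟨a, rfl⟩
  · exact h₂
  · rcases h₂ with rfl | ⟨b, rfl⟩
    · exact Or.inr ⟨a, rfl⟩
    · exact Or.inr ⟨b * a, mul_assoc ..⟩

theorem leR_mul_self (x t : S) : leR (x * t) x := Or.inr ⟨t, rfl⟩

theorem leL.leR_mul (h : leL x y) {t : S} (hy : leR y (y * t)) : leR x (x * t) := by
  rcases hy with e | ⟨a, e⟩
  · exact Or.inl (h.mul_eq_self e.symm).symm
  · exact Or.inr ⟨a, by rw [mul_assoc, h.mul_eq_self (by rw [← mul_assoc, ← e])]⟩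

theorem lrel_refl (x : S) : lrel x x := ⟨leL_refl x, leL_refl x⟩

theorem lrel.symm (h : lrel x y) : lrel y x := ⟨h.2, h.1⟩

theorem lrel.trans (h₁ : lrel x y) (h₂ : lrel y z) : lrel x z :=
  ⟨h₁.1.trans h₂.1, h₂.2.trans h₁.2⟩

theorem lrel.mul_right (h : lrel x y) (t : S) : lrel (x * t) (y * t) :=
  ⟨h.1.mul_right t, h.2.mul_right t⟩

theorem rrel.symm (h : rrel x y) : rrel y x := ⟨h.2, h.1⟩

theorem rrel.trans (h₁ : rrel x y) (h₂ : rrel y z) : rrel x z :=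
  ⟨h₁.1.trans h₂.1, h₂.2.trans h₁.2⟩

theorem hrel_refl (x : S) : hrel x x := ⟨lrel_refl x, leR_refl x, leR_refl x⟩

theorem hrel.symm (h : hrel x y) : hrel y x := ⟨h.1.symm, h.2.symm⟩

theorem hrel.trans (h₁ : hrel x y) (h₂ : hrel y z) : hrel x z :=
  ⟨h₁.1.trans h₂.1, h₁.2.trans h₂.2⟩

end Green

section Schutzenberger

variable {S : Type*} [Semigroup S]

abbrev hClass (v : S) : Set S := {z | hrel v z}

abbrev hClass.self (v : S) : hClass v := ⟨v, hrel_refl v⟩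

variable {v x y h t : S}

theorem hrel_of_mem_hClass (hx : x ∈ hClass v) (hy : y ∈ hClass v) : hrel x y :=
  hx.symm.trans hy

theorem mul_mem_hClass (hh : h ∈ hClass v) (hht : h * t ∈ hClass v) (hx : x ∈ hClass v) :
    x * t ∈ hClass v := by
  have hxh := hrel_of_mem_hClass hx hh
  refine ⟨hht.1.trans (hxh.1.symm.mul_right t), hx.2.trans ⟨?_, leR_mul_self x t⟩⟩
  exact hxh.1.1.leR_mul (hrel_of_mem_hClass hh hht).2.1

theorem exists_mul_mul_eq_self (hvt : v * t ∈ hClass v) :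
    ∃ t', v * t * t' = v ∧ v * t' * t = v := by
  have hle : leL v (v * t) := hvt.1.1
  rcases hvt.2.1 with e | ⟨t', e⟩
  · refine ⟨t, ?_, ?_⟩ <;> rw [← e, ← e]
  · refine ⟨t', e.symm, ?_⟩
    rw [mul_assoc, hle.mul_eq_self (by rw [← mul_assoc, ← e])]

def IsRightMul (π : Equiv.Perm (hClass v)) (t : S) : Prop :=
  ∀ h : hClass v, (π h : S) = h * t

variable {π π' : Equiv.Perm (hClass v)} {t' : S}

theorem IsRightMul.mul_mem (hπ : IsRightMul π t) : v * t ∈ hClass v := by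
  simpa only [hπ (hClass.self v)] using (π (hClass.self v)).2

theorem IsRightMul.mul (hπ : IsRightMul π t) (hπ' : IsRightMul π' t') :
    IsRightMul (π * π') (t' * t) := fun h => by
  rw [Equiv.Perm.mul_apply, hπ, hπ', mul_assoc]

theorem IsRightMul.ext (hπ : IsRightMul π t) (hπ' : IsRightMul π' t) : π = π' :=
  Equiv.ext fun h => Subtype.ext ((hπ h).trans (hπ' h).symm)

/-- Green's lemma. -/
theorem exists_isRightMul (hvt : v * t ∈ hClass v) :
    ∃ π : Equiv.Perm (hClass v), IsRightMul π t ∧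
      ∃ t', IsRightMul π⁻¹ t' ∧ v * t * t' = v := by
  obtain ⟨t', e, e'⟩ := exists_mul_mul_eq_self hvt
  have hvt' : v * t' ∈ hClass v :=
    mul_mem_hClass hvt (by rw [e]; exact hrel_refl v) (hrel_refl v)
  let π : Equiv.Perm (hClass v) :=
    { toFun := fun h => ⟨h * t, mul_mem_hClass (hrel_refl v) hvt h.2⟩
      invFun := fun h => ⟨h * t', mul_mem_hClass (hrel_refl v) hvt' h.2⟩
      left_inv := fun h => Subtype.ext <| by
        simpa only [mul_assoc] using h.2.1.2.mul_eq_self (t := t * t') (by rw [← mul_assoc, e])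
      right_inv := fun h => Subtype.ext <| by
        simpa only [mul_assoc] using h.2.1.2.mul_eq_self (t := t' * t) (by rw [← mul_assoc, e']) }
  exact ⟨π, fun _ => rfl, t', fun _ => rfl, e⟩

theorem IsRightMul.exists_inv (hπ : IsRightMul π t) :
    ∃ t', IsRightMul π⁻¹ t' ∧ v * t * t' = v := by
  obtain ⟨π₀, hπ₀, h⟩ := exists_isRightMul hπ.mul_mem
  rwa [hπ.ext hπ₀]

theorem IsRightMul.eq_one_of_apply_eq (hπ : IsRightMul π t) {x : hClass v} (hx : π x = x) :
    π = 1 :=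
  Equiv.ext fun h => Subtype.ext <| (hπ h).trans <|
    (hrel_of_mem_hClass h.2 x.2).1.1.mul_eq_self ((hπ x).symm.trans (congrArg Subtype.val hx))

theorem IsRightMul.eq_of_apply_eq (hπ : IsRightMul π t) (hπ' : IsRightMul π' t')
    {x : hClass v} (hx : π x = π' x) : π = π' :=
  Equiv.ext fun h => Subtype.ext <| by
    rw [hπ h, hπ' h]
    exact (hrel_of_mem_hClass h.2 x.2).1.1.mul_eq_mul
      ((hπ x).symm.trans ((congrArg Subtype.val hx).trans (hπ' x)))

variable (v) in
/-- `Γ(H)`; the permutation `1` is right multiplication by the identity adjoined to `S`. -/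
def schutzenbergerGroup : Subgroup (Equiv.Perm (hClass v)) where
  carrier := {π | π = 1 ∨ ∃ t, IsRightMul π t}
  one_mem' := Or.inl rfl
  mul_mem' := by
    rintro π π' (rfl | ⟨t, hπ⟩) hπ'
    · rwa [one_mul]
    · rcases hπ' with rfl | ⟨t', hπ'⟩
      · exact Or.inr ⟨t, by rwa [mul_one]⟩
      · exact Or.inr ⟨t' * t, hπ.mul hπ'⟩
  inv_mem' := by
    rintro π (rfl | ⟨t, hπ⟩)
    · exact Or.inl inv_one
    · obtain ⟨t', hπ', -⟩ := hπ.exists_inv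
      exact Or.inr ⟨t', hπ'⟩

theorem schutzenbergerGroup.eq_of_apply_eq (hπ : π ∈ schutzenbergerGroup v)
    (hπ' : π' ∈ schutzenbergerGroup v) {x : hClass v} (hx : π x = π' x) : π = π' := by
  rcases hπ with rfl | ⟨t, hπ⟩ <;> rcases hπ' with rfl | ⟨t', hπ'⟩
  · rfl
  · exact (hπ'.eq_one_of_apply_eq hx.symm).symm
  · exact hπ.eq_one_of_apply_eq hx
  · exact hπ.eq_of_apply_eq hπ' hx

end Schutzenberger

theorem pfAct_some_of_eq {M A : Type*} {act : M → A → A} {L : Set A} {m : M} {x w : L}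
    (h : act m x = w) : pfAct act L m (some x) = some w := by
  rw [pfAct, dif_pos (h ▸ w.2)]
  exact congrArg some (Subtype.ext h)

theorem pfAct_some_of_notMem {M A : Type*} {act : M → A → A} {L : Set A} {m : M} {x : L}
    (h : act m x ∉ L) : pfAct act L m (some x) = none := by
  rw [pfAct, dif_neg h]

theorem ActCong.rel_some {M A : Type*} {act : M → A → A} {L : Set A}
    (σ : ActCong M (Option L) (pfAct act L)) (m : M) {x y x' y' : L}
    (hx : act m x = x') (hy : act m y = y') (h : σ.1.r (some x) (some y)) :
    σ.1.r (some x') (some y') := by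
  simpa only [pfAct_some_of_eq hx, pfAct_some_of_eq hy] using σ.2 m h

section PrincipalFactor

variable {S : Type*} [Semigroup S] {u v t : S}

abbrev lClass (u : S) : Set S := {z | lrel u z}

abbrev PrincipalFactorCong (u : S) :=
  ActCong S (Option (lClass u)) (pfAct (fun s y => s * y) (lClass u))

abbrev HbarInterval (u : S) :=
  ↥{σ : PrincipalFactorCong u | ∀ a b, σ.1.r a b → HbarRel (lClass u) a b}

theorem mem_lClass_mul (hv : lrel u v) (hvt : v * t ∈ hClass v) {z : S} (hz : z ∈ lClass u) :
    z * t ∈ lClass u :=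
  (hv.trans hvt.1).trans ((hv.symm.trans hz).mul_right t)

abbrev hIncl (hv : lrel u v) (x : hClass v) : Option (lClass u) :=
  some ⟨x, hv.trans x.2.1⟩

theorem PrincipalFactorCong.rel_of_isRightMul (hv : lrel u v) (σ : PrincipalFactorCong u)
    {π : Equiv.Perm (hClass v)} (hπ : IsRightMul π t)
    (hσ : σ.1.r (hIncl hv (hClass.self v)) (hIncl hv (π (hClass.self v))))
    {x y : lClass u} (hxy : (y : S) = x * t) : σ.1.r (some x) (some y) := by
  rcases (hv.symm.trans x.2).2 with e | ⟨c, e⟩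
  · have hx : some x = hIncl hv (hClass.self v) := congrArg some (Subtype.ext e)
    have hy : some y = hIncl hv (π (hClass.self v)) :=
      congrArg some (Subtype.ext (by rw [hxy, e, hπ]))
    rwa [hx, hy]
  · exact σ.rel_some c e.symm (by rw [hπ, ← mul_assoc, ← e, hxy]) hσ

theorem PrincipalFactorCong.rel_apply (hv : lrel u v) (σ : PrincipalFactorCong u)
    {π : Equiv.Perm (hClass v)} (hπ : π ∈ schutzenbergerGroup v)
    (hσ : σ.1.r (hIncl hv (hClass.self v)) (hIncl hv (π (hClass.self v)))) (x : hClass v) :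
    σ.1.r (hIncl hv x) (hIncl hv (π x)) := by
  rcases hπ with rfl | ⟨t, hπ⟩
  · exact σ.1.iseqv.refl _
  · exact σ.rel_of_isRightMul hv hπ hσ (hπ x)

def PrincipalFactorCong.toSubgroup (hv : lrel u v) (σ : PrincipalFactorCong u) :
    Subgroup (schutzenbergerGroup v) where
  carrier := {π | σ.1.r (hIncl hv (hClass.self v))
    (hIncl hv ((π : Equiv.Perm _) (hClass.self v)))}
  one_mem' := σ.1.iseqv.refl _
  mul_mem' {π π'} hπ hπ' := σ.1.iseqv.trans hπ' (σ.rel_apply hv π.2 (by exact hπ) _)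
  inv_mem' {π} hπ := by
    have h := σ.rel_apply hv π.2 hπ ((π : Equiv.Perm _)⁻¹ (hClass.self v))
    rw [← Equiv.Perm.mul_apply, mul_inv_cancel, Equiv.Perm.one_apply] at h
    exact σ.1.iseqv.symm h

/-- The orbit relation on `L ∪ {0}` of a subgroup `K ≤ Γ(H)` acting by right translations. -/
def subgroupRel (K : Subgroup (schutzenbergerGroup v)) (a b : Option (lClass u)) : Prop :=
  a = b ∨ ∃ (x y : lClass u) (t : S), a = some x ∧ b = some y ∧ (y : S) = x * t ∧
    ∃ π ∈ K, IsRightMul (π : Equiv.Perm (hClass v)) t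

theorem IsRightMul.exists_inv_of_mul_eq (hv : lrel u v) {π : Equiv.Perm (hClass v)}
    (hπ : IsRightMul π t) {x y : lClass u} (hxy : (y : S) = x * t) :
    ∃ t', IsRightMul π⁻¹ t' ∧ (x : S) = y * t' := by
  obtain ⟨t', hπ', e⟩ := hπ.exists_inv
  refine ⟨t', hπ', ?_⟩
  rw [hxy, mul_assoc, (hv.symm.trans x.2).2.mul_eq_self (by rw [← mul_assoc, e])]

variable {K K' : Subgroup (schutzenbergerGroup v)} {a b c : Option (lClass u)}

theorem subgroupRel_mono (hK : K ≤ K') (h : subgroupRel K a b) : subgroupRel K' a b := by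
  rcases h with rfl | ⟨x, y, t, rfl, rfl, hxy, π, hπ, hπt⟩
  · exact Or.inl rfl
  · exact Or.inr ⟨x, y, t, rfl, rfl, hxy, π, hK hπ, hπt⟩

theorem subgroupRel.symm (hv : lrel u v) (h : subgroupRel K a b) : subgroupRel K b a := by
  rcases h with rfl | ⟨x, y, t, rfl, rfl, hxy, π, hπ, hπt⟩
  · exact Or.inl rfl
  · obtain ⟨t', hπt', hyx⟩ := hπt.exists_inv_of_mul_eq hv hxy
    exact Or.inr ⟨y, x, t', rfl, rfl, hyx, π⁻¹, inv_mem hπ, hπt'⟩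

theorem subgroupRel.trans (h₁ : subgroupRel K a b) (h₂ : subgroupRel K b c) :
    subgroupRel K a c := by
  rcases h₁ with rfl | ⟨x, y, t, rfl, rfl, hxy, π, hπ, hπt⟩
  · exact h₂
  rcases h₂ with h | ⟨y', z, t', hy, rfl, hyz, π', hπ', hπt'⟩
  · exact h ▸ Or.inr ⟨x, y, t, rfl, rfl, hxy, π, hπ, hπt⟩
  · obtain rfl := Option.some.inj hy
    exact Or.inr ⟨x, z, t * t', rfl, rfl, by rw [hyz, hxy, mul_assoc], π' * π, mul_mem hπ' hπ,
      hπt'.mul hπt⟩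

theorem subgroupRel.pfAct (hv : lrel u v) (m : S) (h : subgroupRel K a b) :
    subgroupRel K (pfAct (fun s y => s * y) (lClass u) m a)
      (pfAct (fun s y => s * y) (lClass u) m b) := by
  rcases h with rfl | ⟨x, y, t, rfl, rfl, hxy, π, hπ, hπt⟩
  · exact Or.inl rfl
  obtain ⟨t', hπt', hyx⟩ := hπt.exists_inv_of_mul_eq hv hxy
  by_cases hm : m * x ∈ lClass u
  · have hmy : m * y ∈ lClass u := by
      rw [hxy, ← mul_assoc]
      exact mem_lClass_mul hv hπt.mul_mem hm
    rw [pfAct_some_of_eq (act := (· * ·)) (w := ⟨_, hm⟩) rfl,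
      pfAct_some_of_eq (act := (· * ·)) (w := ⟨_, hmy⟩) rfl]
    exact Or.inr ⟨_, _, t, rfl, rfl, show m * (y : S) = m * x * t by rw [hxy, mul_assoc],
      π, hπ, hπt⟩
  · have hmy : m * y ∉ lClass u := fun hmy => hm <| by
      rw [hyx, ← mul_assoc]
      exact mem_lClass_mul hv hπt'.mul_mem hmy
    rw [pfAct_some_of_notMem hm, pfAct_some_of_notMem hmy]
    exact Or.inl rfl

theorem subgroupRel.hbarRel (hv : lrel u v) (h : subgroupRel K a b) :
    HbarRel (lClass u) a b := by
  rcases h with rfl | ⟨x, y, t, rfl, rfl, hxy, π, hπ, hπt⟩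
  · cases a with
    | none => exact Or.inl ⟨rfl, rfl⟩
    | some x => exact Or.inr ⟨x, x, rfl, rfl, hrel_refl _⟩
  · obtain ⟨t', -, hyx⟩ := hπt.exists_inv_of_mul_eq hv hxy
    exact Or.inr ⟨x, y, rfl, rfl, x.2.symm.trans y.2, Or.inr ⟨t', hyx⟩, Or.inr ⟨t, hxy⟩⟩

def subgroupCong (hv : lrel u v) (K : Subgroup (schutzenbergerGroup v)) : HbarInterval u :=
  ⟨⟨⟨subgroupRel K, ⟨fun _ => Or.inl rfl, subgroupRel.symm hv, subgroupRel.trans⟩⟩,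
    fun m _ _ => subgroupRel.pfAct hv m⟩, fun _ _ => subgroupRel.hbarRel hv⟩

theorem subgroupRel_hIncl_iff (hv : lrel u v) {x y : hClass v} :
    subgroupRel K (hIncl hv x) (hIncl hv y) ↔
      ∃ π ∈ K, (π : Equiv.Perm (hClass v)) x = y := by
  constructor
  · rintro (h | ⟨x', y', t, hx, hy, hxy, π, hπ, hπt⟩)
    · injection h with h
      injection h with h
      exact ⟨1, one_mem K, Subtype.ext h⟩
    · cases hx; cases hy
      exact ⟨π, hπ, Subtype.ext ((hπt x).trans hxy.symm)⟩
  · rintro ⟨π, hπ, rfl⟩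
    rcases π.2 with h | ⟨t, hπt⟩
    · exact Or.inl (by rw [h]; rfl)
    · exact Or.inr ⟨_, _, t, rfl, rfl, hπt x, π, hπ, hπt⟩

theorem toSubgroup_subgroupCong (hv : lrel u v) (K : Subgroup (schutzenbergerGroup v)) :
    (subgroupCong hv K).1.toSubgroup hv = K := by
  ext π
  change subgroupRel K _ _ ↔ _
  rw [subgroupRel_hIncl_iff]
  refine ⟨fun ⟨π', hπ', e⟩ => ?_, fun hπ => ⟨π, hπ, rfl⟩⟩
  rwa [← Subtype.ext (schutzenbergerGroup.eq_of_apply_eq π'.2 π.2 e)]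

theorem HbarInterval.hrel_of_rel (σ : HbarInterval u) {x y : lClass u}
    (h : σ.1.1.r (some x) (some y)) : hrel (x : S) y := by
  rcases σ.2 _ _ h with ⟨⟨⟩, -⟩ | ⟨x', y', ⟨⟩, ⟨⟩, hxy⟩
  exact hxy

theorem HbarInterval.exists_rel_mul_left (σ : HbarInterval u) {x y x' : lClass u} {y' : S}
    (c : S) (hx : c * x = x') (hy : c * y = y') (h : σ.1.1.r (some x) (some y)) :
    ∃ hy' : y' ∈ lClass u, σ.1.1.r (some x') (some ⟨y', hy'⟩) := by
  by_cases hy' : y' ∈ lClass u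
  · exact ⟨hy', σ.1.rel_some c hx hy h⟩
  · have h' := σ.1.2 c h
    rw [pfAct_some_of_eq hx, pfAct_some_of_notMem (hy ▸ hy')] at h'
    rcases σ.2 _ _ h' with ⟨⟨⟩, -⟩ | ⟨-, -, -, ⟨⟩, -⟩

/-- Left multiplication by `c` with `v = cx` carries `(x, xt)` to `(v, vt)`, and staying
inside `H̄` forces `vt ∈ H`. -/
theorem HbarInterval.exists_mem_toSubgroup (hv : lrel u v) (σ : HbarInterval u)
    {x y : lClass u} {t : S} (hxy : (y : S) = x * t) (h : σ.1.1.r (some x) (some y)) :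
    ∃ π ∈ σ.1.toSubgroup hv, IsRightMul (π : Equiv.Perm (hClass v)) t := by
  obtain ⟨hvtL, hσ⟩ :
      ∃ hvt : v * t ∈ lClass u, σ.1.1.r (some ⟨v, hv⟩) (some ⟨v * t, hvt⟩) := by
    rcases (hv.symm.trans x.2).1 with e | ⟨c, e⟩
    · obtain ⟨x, hx⟩ := x
      obtain ⟨y, hy⟩ := y
      dsimp only at e hxy
      subst e hxy
      exact ⟨hy, h⟩
    · exact σ.exists_rel_mul_left c e.symm (by rw [hxy, ← mul_assoc, ← e]) h
  obtain ⟨π, hπt, -⟩ := exists_isRightMul (σ.hrel_of_rel hσ)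
  refine ⟨⟨π, Or.inr ⟨t, hπt⟩⟩, ?_, hπt⟩
  change σ.1.1.r (hIncl hv (hClass.self v)) (hIncl hv (π (hClass.self v)))
  rwa [show hIncl hv (π (hClass.self v)) = some ⟨v * t, hvtL⟩ from
    congrArg some (Subtype.ext (hπt _))]

theorem HbarInterval.rel_iff_subgroupRel (hv : lrel u v) (σ : HbarInterval u)
    (a b : Option (lClass u)) : σ.1.1.r a b ↔ subgroupRel (σ.1.toSubgroup hv) a b := by
  constructor
  · intro h
    rcases σ.2 a b h with ⟨rfl, rfl⟩ | ⟨x, y, rfl, rfl, hxy⟩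
    · exact Or.inl rfl
    rcases hxy.2.2 with e | ⟨t, e⟩
    · exact Or.inl (congrArg some (Subtype.ext e.symm))
    · exact Or.inr ⟨x, y, t, rfl, rfl, e, σ.exists_mem_toSubgroup hv e h⟩
  · rintro (rfl | ⟨x, y, t, rfl, rfl, hxy, π, hπ, hπt⟩)
    · exact σ.1.1.iseqv.refl _
    · exact σ.1.rel_of_isRightMul hv hπt hπ hxy

noncomputable def hbarIntervalOrderIso (hv : lrel u v) :
    HbarInterval u ≃o Subgroup (schutzenbergerGroup v) :=
  Equiv.toOrderIso
    { toFun := fun σ => σ.1.toSubgroup hv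
      invFun := subgroupCong hv
      left_inv := fun σ => Subtype.ext <| Subtype.ext <| Setoid.ext fun a b =>
        (σ.rel_iff_subgroupRel hv a b).symm
      right_inv := toSubgroup_subgroupCong hv }
    (fun _ _ h _ hπ => h hπ)
    (fun _ _ hK _ _ => subgroupRel_mono hK)

end PrincipalFactor

theorem schutzenberger_interval_iso_general {S : Type*} [Semigroup S] (u v : S)
    (hHL : ∀ z : S, hrel v z → lrel u z) :
    ∃ Γ : Subgroup (Equiv.Perm ↥{z | hrel v z}),
      ((Γ : Set (Equiv.Perm ↥{z | hrel v z})) =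
        {π | π = Equiv.refl ↥{z | hrel v z} ∨
          ∃ t : S, ∀ h : ↥{z | hrel v z}, (↑(π h) : S) = (h : S) * t}) ∧
      ∃ e : ↥{σ : ActCong S (Option ↥{z | lrel u z})
                (pfAct (fun s y => s * y) {z | lrel u z}) |
              ∀ a b, σ.1.r a b → HbarRel {z | lrel u z} a b} ≃o Subgroup ↥Γ,
        ∀ σ (x y : ↥{z | hrel v z}),
          σ.1.1.r (some ⟨(x : S), hHL _ x.2⟩) (some ⟨(y : S), hHL _ y.2⟩) ↔
            ∃ π : ↥Γ, π ∈ e σ ∧ (π : Equiv.Perm ↥{z | hrel v z}) x = y := by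
  have hv : lrel u v := hHL v (hrel_refl v)
  refine ⟨schutzenbergerGroup v, rfl, hbarIntervalOrderIso hv, fun σ x y => ?_⟩
  exact (HbarInterval.rel_iff_subgroupRel hv σ _ _).trans (subgroupRel_hIncl_iff hv)

/-- Let `S` be a semigroup, `L = L_u` an `L`-class and `H = H_v ⊆ L` an `H`-class
contained in it.  Then the interval `[Δ, H_L̄]` of the congruence lattice of the
principal factor left `S`-act on `L ∪ {0}` is isomorphic, as a lattice, to the
subgroup lattice of the (right) Schützenberger group
`Γ(H) = {ρ_t : h ↦ ht | t ∈ S¹, Ht ⊆ H} ≤ Sym(H)`; moreover the isomorphism is given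
by restriction to `H`: a congruence `σ` in the interval relates two elements of `H`
exactly when the corresponding subgroup `e σ ≤ Γ(H)` contains a permutation carrying
one to the other (this is the correspondence between left congruences of the group
structure `(H, ⋆)` of `Γ(H)` and its subgroups). -/
theorem schutzenberger_interval_iso {S : Type*} [Semigroup S] (u v : S)
    (hv : lrel u v) (hHL : ∀ z : S, hrel v z → lrel u z) :
    ∃ Γ : Subgroup (Equiv.Perm ↥{z | hrel v z}),
      ((Γ : Set (Equiv.Perm ↥{z | hrel v z})) =
        {π | π = Equiv.refl ↥{z | hrel v z} ∨
          ∃ t : S, ∀ h : ↥{z | hrel v z}, (↑(π h) : S) = (h : S) * t}) ∧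
      ∃ e : ↥{σ : ActCong S (Option ↥{z | lrel u z})
                (pfAct (fun s y => s * y) {z | lrel u z}) |
              ∀ a b, σ.1.r a b → HbarRel {z | lrel u z} a b} ≃o Subgroup ↥Γ,
        ∀ σ (x y : ↥{z | hrel v z}),
          σ.1.1.r (some ⟨(x : S), hHL _ x.2⟩) (some ⟨(y : S), hHL _ y.2⟩) ↔
            ∃ π : ↥Γ, π ∈ e σ ∧ (π : Equiv.Perm ↥{z | hrel v z}) x = y :=
  schutzenberger_interval_iso_general u v hHL
end
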